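/- Creation operators are isometries for the form ⟨·|·⟩: for any words w0, w1 over {x,y}, s ∈ {x,y}, and any valid index i, ⟨w0|w1⟩ = ⟨a*_{s,i} w0 | a*_{s,i} w1⟩. -/

import Mathlib

open scoped Classical

/-- Words over the two-letter alphabet {x,y}; `false` is `x`, `true` is `y`. -/
abbrev Word := List Bool

/-- 0-indexed positions of the x's (`false`) in a word. -/
def xIdx (w : Word) : List ℕ :=
  (List.range w.length).filter (fun j => w.getD j true = false)

/-- 0-indexed positions of the y's (`true`) in a word. -/
def yIdx (w : Word) : List ℕ :=
  (List.range w.length).filter (fun j => w.getD j false = true)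

/-- `fX w i` = number of y's strictly left of the i-th x of `w` (i is 0-indexed). -/
def fX (w : Word) (i : ℕ) : ℕ := (xIdx w).getD i 0 - i

/-- `fY w j` = number of x's strictly left of the j-th y of `w` (j is 0-indexed). -/
def fY (w : Word) (j : ℕ) : ℕ := (yIdx w).getD j 0 - j

/-- `hX w i` = (1-indexed) position of the i-th x of `w` (i is 0-indexed). -/
def hX (w : Word) (i : ℕ) : ℕ := (xIdx w).getD i 0 + 1

/-- The pawn-move partial order: same letter counts, and each x of `w0` lies at a
position at most that of the corresponding x of `w1`. -/
def wle (w0 w1 : Word) : Prop :=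
  w0.count false = w1.count false ∧ w0.count true = w1.count true ∧
  ∀ i < w0.count false, (xIdx w0).getD i 0 ≤ (xIdx w1).getD i 0

/-- Creation operator `a*_{s,i}` on words: `i = 0` prepends `s`; `1 ≤ i ≤ n_s`
replaces the i-th `s` by `ss`; `i = n_s + 1` appends `s`. -/
def create (s : Bool) : ℕ → Word → Word
  | 0, w => s :: w
  | _+1, [] => [s]
  | i+1, a :: w =>
    if a = s then (if i = 0 then s :: s :: w else a :: create s i w)
    else a :: create s (i+1) w

/-- Delete the i-th occurrence (1-indexed) of `s`. -/
def delNth (s : Bool) : ℕ → Word → Word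
  | _, [] => []
  | i, a :: w => if a = s then (if i ≤ 1 then w else a :: delNth s (i-1) w)
                 else a :: delNth s i w

/-- Annihilation operator `a_{s,i}` on words: `i = 0` deletes an initial `s` (else 0);
`1 ≤ i ≤ n_s` deletes the i-th `s`; `i = n_s + 1` deletes a final `s` (else 0). -/
def annih (s : Bool) (i : ℕ) (w : Word) : Option Word :=
  if i = 0 then
    match w with
    | a :: t => if a = s then some t else none
    | [] => none
  else if i ≤ w.count s then some (delNth s i w)
  else if i = w.count s + 1 then
    if w.getLast? = some s then some w.dropLast else none
  else none

/-- The free ℤ-module on words: the Fock space `F`. -/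
abbrev FS := Word →₀ ℤ

/-- Basis vector of a word. -/
noncomputable def δ (w : Word) : FS := Finsupp.single w 1

/-- `0` for `none`, basis vector for `some`. -/
noncomputable def optδ (o : Option Word) : FS := o.elim 0 δ

/-- Extend a word-indexed family of vectors to a linear map on `FS`. -/
noncomputable def opOf (g : Word → FS) : FS →ₗ[ℤ] FS := Finsupp.lift FS ℤ Word g

/-- Creation operator as a linear map. -/
noncomputable def Cr (s : Bool) (i : ℕ) : FS →ₗ[ℤ] FS := opOf (fun w => δ (create s i w))

/-- Annihilation operator as a linear map. -/
noncomputable def An (s : Bool) (i : ℕ) : FS →ₗ[ℤ] FS := opOf (fun w => optδ (annih s i w))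

/-- Boolean bilinear form on words: `1` if `w0 ≤ w1` in the pawn-move order, else `0`. -/
noncomputable def pairW (w0 w1 : Word) : ℤ := if wle w0 w1 then 1 else 0

/-- Bilinear extension of `pairW` to the free module. -/
noncomputable def pairF (u v : FS) : ℤ :=
  u.sum fun w0 a => v.sum fun w1 b => a * b * pairW w0 w1

/-- Kronecker delta form on words. -/
noncomputable def dotW (w0 w1 : Word) : ℤ := if w0 = w1 then 1 else 0

/-- Bilinear extension of `dotW`: words form an orthonormal basis. -/
noncomputable def dotF (u v : FS) : ℤ :=
  u.sum fun w0 a => v.sum fun w1 b => a * b * dotW w0 w1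

/-- All words of a given length. -/
noncomputable def wordsOfLen (n : ℕ) : Finset Word :=
  (Finset.univ : Finset (Fin n → Bool)).image List.ofFn

/-- Swap `xy → yx` at the x's whose (0-indexed) number lies in `T`;
the counter `k` records how many x's have been passed. -/
def psiX (T : Finset ℕ) : Word → ℕ → Word
  | [], _ => []
  | false :: true :: w, k =>
      if k ∈ T then true :: false :: psiX T w (k+1)
      else false :: psiX T (true :: w) (k+1)
  | false :: w, k => false :: psiX T w (k+1)
  | true :: w, k => true :: psiX T w k
  termination_by w _ => w.length
  decreasing_by all_goals (simp <;> omega)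

/-- Swap `yx → xy` at the y's whose (0-indexed) number lies in `T`. -/
def psiY (T : Finset ℕ) : Word → ℕ → Word
  | [], _ => []
  | true :: false :: w, k =>
      if k ∈ T then false :: true :: psiY T w (k+1)
      else true :: psiY T (false :: w) (k+1)
  | true :: w, k => true :: psiY T w (k+1)
  | false :: w, k => false :: psiY T w k
  termination_by w _ => w.length
  decreasing_by all_goals (simp <;> omega)

/-- `Ex w`: 0-indexed numbers of the x's of `w` immediately followed by a y. -/
noncomputable def Ex (w : Word) : Finset ℕ :=
  (Finset.range (w.count false)).filter
    (fun i => w.getD ((xIdx w).getD i 0 + 1) false = true)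

/-- `Ey w`: 0-indexed numbers of the y's of `w` immediately followed by an x. -/
noncomputable def Ey (w : Word) : Finset ℕ :=
  (Finset.range (w.count true)).filter
    (fun i => w.getD ((yIdx w).getD i 0 + 1) true = false)

/-!
Encode a word by its profile: for each `x`, the number of `y`s before it. Then `w0 ≤ w1` means
equal letter counts and a pointwise smaller `x`-profile, or equivalently, by a Galois-connection
argument between the two profiles, a pointwise larger `y`-profile. Inserting a `y` next to the
`i`-th `y` (or at an end) replaces each entry `n` of the `x`-profile by `bump i n`, a strictly
monotone function of `n`, so the comparison is unchanged; inserting an `x` is the same with the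
letters exchanged, using the `y`-profile.
-/

lemma List.forall₂_map_iff_of_strictMono {α β : Type*} [LinearOrder α] [Preorder β] {f : α → β}
    (hf : StrictMono f) {l m : List α} :
    List.Forall₂ (· ≤ ·) (l.map f) (m.map f) ↔ List.Forall₂ (· ≤ ·) l m := by
  simp only [List.forall₂_map_left_iff, List.forall₂_map_right_iff, hf.le_iff_le]

/-- For each occurrence of `s` in the word, the number of letters `!s` preceding it. -/
def profile (s : Bool) : Word → List ℕ
  | [] => []
  | a :: w => if a = s then 0 :: profile s w else (profile s w).map (· + 1)

@[simp]
lemma length_profile (s : Bool) (w : Word) : (profile s w).length = w.count s := by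
  induction w with
  | nil => rfl
  | cons a w ih => by_cases h : a = s <;> simp [profile, h, ih]

lemma profile_getElem_le (s : Bool) (w : Word) (j : ℕ) (hj : j < (profile s w).length) :
    (profile s w)[j] ≤ w.count (!s) := by
  induction w generalizing j with
  | nil => simp [profile] at hj
  | cons a w ih =>
    by_cases h : a = s
    · subst h
      simp only [profile, if_true] at hj ⊢
      cases j with
      | zero => simp
      | succ j => simpa [List.count_cons] using ih j (by simpa using hj)
    · obtain rfl := Bool.eq_not.mpr h
      simp only [profile, Bool.not_eq_self, if_false, List.length_map, List.getElem_map] at hj ⊢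
      simpa [List.count_cons] using ih j hj

/-- Both sides say that the `j`-th `s` comes before the `m`-th `!s`. -/
lemma profile_getElem_le_iff (s : Bool) (w : Word) (j m : ℕ) (hj : j < (profile s w).length)
    (hm : m < (profile (!s) w).length) :
    (profile s w)[j] ≤ m ↔ j < (profile (!s) w)[m] := by
  induction w generalizing j m with
  | nil => simp [profile] at hj
  | cons a w ih =>
    by_cases h : a = s
    · subst h
      simp only [profile, if_true, Bool.eq_not_self, if_false, List.length_map,
        List.getElem_map] at hj hm ⊢
      cases j with
      | zero => simp
      | succ j => simpa using ih j m (by simpa using hj) hm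
    · obtain rfl := Bool.eq_not.mpr h
      simp only [profile, if_true, Bool.not_eq_self, if_false, List.length_map,
        List.getElem_map] at hj hm ⊢
      cases m with
      | zero => simp
      | succ m => simpa using ih j m hj (by simpa using hm)

lemma forall₂_profile_not_of_forall₂ (s : Bool) (w0 w1 : Word) (hs : w0.count s = w1.count s)
    (hns : w0.count (!s) = w1.count (!s))
    (h : List.Forall₂ (· ≤ ·) (profile s w0) (profile s w1)) :
    List.Forall₂ (· ≤ ·) (profile (!s) w1) (profile (!s) w0) := by
  rw [List.forall₂_iff_get] at h ⊢
  simp only [length_profile, List.get_eq_getElem] at h ⊢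
  refine ⟨hns.symm, fun m hm1 hm0 => ?_⟩
  by_contra! hlt
  set j := (profile (!s) w0)[m]'(by simpa using hm0)
  have hj : j < w1.count s := by
    simpa using hlt.trans_le (profile_getElem_le (!s) w1 m (by simpa using hm1))
  have h1 : (profile s w1)[j]'(by simpa using hj) ≤ m :=
    (profile_getElem_le_iff s w1 j m _ (by simpa using hm1)).mpr hlt
  have h0 := (profile_getElem_le_iff s w0 j m (by simpa [hs] using hj) (by simpa using hm0)).mp
    ((h.2 j (hs ▸ hj) hj).trans h1)
  exact lt_irrefl j h0

lemma xIdx_cons (a : Bool) (w : Word) :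
    xIdx (a :: w) = if a = false then 0 :: (xIdx w).map (· + 1) else (xIdx w).map (· + 1) := by
  unfold xIdx
  rw [List.length_cons, List.range_succ_eq_map, List.filter_cons, List.filter_map]
  cases a <;> rfl

lemma xIdx_eq_mapIdx_profile (w : Word) : xIdx w = (profile false w).mapIdx (fun j n => n + j) := by
  induction w with
  | nil => rfl
  | cons a w ih =>
    rw [xIdx_cons, ih]
    apply List.ext_getElem
    · cases a <;> simp [profile]
    · intro j h1 h2
      cases a
      · cases j <;> simp [profile, ← add_assoc]
      · simp [profile, add_right_comm]

lemma wle_iff_forall₂_profile_false (w0 w1 : Word) :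
    wle w0 w1 ↔ w0.count false = w1.count false ∧ w0.count true = w1.count true ∧
      List.Forall₂ (· ≤ ·) (profile false w0) (profile false w1) := by
  unfold wle
  refine and_congr_right fun hx => and_congr_right fun _ => ?_
  rw [xIdx_eq_mapIdx_profile, xIdx_eq_mapIdx_profile, List.forall₂_iff_get]
  simp +contextual [hx]

lemma wle_iff_forall₂_profile_true (w0 w1 : Word) :
    wle w0 w1 ↔ w0.count false = w1.count false ∧ w0.count true = w1.count true ∧
      List.Forall₂ (· ≤ ·) (profile true w1) (profile true w0) := by
  rw [wle_iff_forall₂_profile_false]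
  refine and_congr_right fun hx => and_congr_right fun hy => ⟨?_, ?_⟩
  · exact forall₂_profile_not_of_forall₂ false w0 w1 hx hy
  · exact forall₂_profile_not_of_forall₂ true w1 w0 hy.symm hx.symm

lemma create_perm (s : Bool) (i : ℕ) (w : Word) : (create s i w).Perm (s :: w) := by
  induction i, w using create.induct s with
  | case1 w => simp [create]
  | case2 i => simp [create]
  | case3 w => simp [create]
  | case4 i w hi ih => simpa [create, hi] using (ih.cons s).trans (.swap s s w)
  | case5 i a w ha ih => simpa [create, ha] using (ih.cons a).trans (.swap s a w)

lemma count_create (s : Bool) (i : ℕ) (w : Word) (t : Bool) :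
    (create s i w).count t = (s :: w).count t :=
  (create_perm s i w).count_eq t

def bump (i n : ℕ) : ℕ := if i ≤ n then n + 1 else n

lemma bump_strictMono (i : ℕ) : StrictMono (bump i) := by
  intro a b hab
  unfold bump
  split_ifs <;> omega

lemma bump_succ_succ (i n : ℕ) : bump (i + 1) (n + 1) = bump i n + 1 := by
  simp only [bump, Nat.add_le_add_iff_right]
  split_ifs <;> rfl

/-- The new `s` sits next to the `i`-th `s`, so it passes exactly the letters `t` preceded by at
least `i` letters `s`. -/
lemma profile_create_of_ne {s t : Bool} (hst : s ≠ t) (i : ℕ) (w : Word) :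
    profile t (create s i w) = (profile t w).map (bump i) := by
  obtain rfl := Bool.eq_not.mpr hst.symm
  induction i, w using create.induct s with
  | case1 w => simp [create, profile, bump]
  | case2 i => simp [create, profile]
  | case3 w => simp [create, profile, bump]
  | case4 i w hi ih => simp [create, profile, hi, ih, Function.comp_def, bump_succ_succ]
  | case5 i a w ha ih =>
    obtain rfl := Bool.eq_not.mpr ha
    simp [create, profile, ih, bump]

lemma wle_create_iff (s : Bool) (i : ℕ) (w0 w1 : Word) :
    wle (create s i w0) (create s i w1) ↔ wle w0 w1 := by
  cases s
  · rw [wle_iff_forall₂_profile_true, wle_iff_forall₂_profile_true,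
      profile_create_of_ne Bool.false_ne_true, profile_create_of_ne Bool.false_ne_true,
      List.forall₂_map_iff_of_strictMono (bump_strictMono i)]
    simp [count_create]
  · rw [wle_iff_forall₂_profile_false, wle_iff_forall₂_profile_false,
      profile_create_of_ne Bool.false_ne_true.symm, profile_create_of_ne Bool.false_ne_true.symm,
      List.forall₂_map_iff_of_strictMono (bump_strictMono i)]
    simp [count_create]

theorem stmt9_general (s : Bool) (i : ℕ) (w0 w1 : Word) :
    pairW w0 w1 = pairW (create s i w0) (create s i w1) := by
  simp only [pairW, wle_create_iff]

/-- Creation operators are isometries for `⟨·|·⟩`: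
`⟨w0|w1⟩ = ⟨a*_{s,i} w0 | a*_{s,i} w1⟩` for any valid index `i`. -/
theorem stmt9 (s : Bool) (i : ℕ) (w0 w1 : Word)
    (h0 : i ≤ w0.count s + 1) (h1 : i ≤ w1.count s + 1) :
    pairW w0 w1 = pairW (create s i w0) (create s i w1) :=
  stmt9_general s i w0 w1
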